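/- If a clause C is a set-blocked clause for a nonempty subset L ⊆ C with respect to a CNF Γ, then Γ and Γ ∪ {C} are equisatisfiable. -/

import Mathlib

open Classical

abbrev Var := ℕ
abbrev Lit := Var × Bool

def negLit (l : Lit) : Lit := (l.1, !l.2)

abbrev Clause := Finset Lit

/-- A set of literals is tautological if it contains a complementary pair. -/
def Tauto (S : Finset Lit) : Prop := ∃ l ∈ S, negLit l ∈ S

abbrev CNF := Set Clause

abbrev Assign := Var → Bool

def SatLit (α : Assign) (l : Lit) : Prop := α l.1 = l.2
def SatClause (α : Assign) (C : Clause) : Prop := ∃ l ∈ C, SatLit α l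
def SatCNF (α : Assign) (Γ : CNF) : Prop := ∀ C ∈ Γ, SatClause α C
def Satisfiable (Γ : CNF) : Prop := ∃ α, SatCNF α Γ
def Equisat (Γ Δ : CNF) : Prop := Satisfiable Γ ↔ Satisfiable Δ

/-- `C` is a blocked clause for the literal `p` with respect to `Γ`. -/
def Blocked (C : Clause) (p : Lit) (Γ : CNF) : Prop :=
  p ∈ C ∧ ∀ D ∈ Γ, negLit p ∈ D → Tauto (C.erase p ∪ D.erase (negLit p))

def negSet (L : Finset Lit) : Finset Lit := L.image negLit

/-- `C` is a set-blocked clause for `L` with respect to `Γ`. -/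
def SetBlocked (C : Clause) (L : Finset Lit) (Γ : CNF) : Prop :=
  L.Nonempty ∧ L ⊆ C ∧
    ∀ D ∈ Γ, (D ∩ negSet L).Nonempty → D ∩ L = ∅ →
      Tauto ((C \ L) ∪ (D \ negSet L))

def varsClause (C : Clause) : Finset Var := C.image Prod.fst
def varsCNF (Γ : CNF) : Set Var := {v | ∃ C ∈ Γ, v ∈ varsClause C}

/-- Partial assignments. -/
abbrev PAssign := Var → Option Bool

def restrictClause (α : PAssign) (C : Clause) : Clause :=
  C.filter fun l => α l.1 ≠ some (!l.2)

def PSatClause' (α : PAssign) (C : Clause) : Prop := ∃ l ∈ C, α l.1 = some l.2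

def restrictCNF (α : PAssign) (Γ : CNF) : CNF :=
  {E | ∃ C ∈ Γ, ¬ PSatClause' α C ∧ E = restrictClause α C}

/-- `E` is a resolvent of `F` and `G`. -/
def Resolvent (E F G : Clause) : Prop :=
  ∃ (x : Var) (A B : Clause), x ∉ varsClause A ∧ x ∉ varsClause B ∧
    F = insert (x, true) A ∧ G = insert (x, false) B ∧
    E = A ∪ B ∧ ¬ Tauto (A ∪ B)

/-- One step of a resolution proof: add a resolvent or a weakening. -/
def ResStep (Γ Γ' : CNF) : Prop :=
  ∃ C, Γ' = Γ ∪ {C} ∧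
    ((∃ F ∈ Γ, ∃ G ∈ Γ, Resolvent C F G) ∨ (∃ D ∈ Γ, D ⊆ C ∧ ¬ Tauto C))

/-- A resolution proof (refutation) of `Γ`. -/
def ResProofOf (Γ : CNF) (prf : List CNF) : Prop :=
  prf.head? = some Γ ∧ (∃ Δ, prf.getLast? = some Δ ∧ (∅ : Clause) ∈ Δ) ∧
    List.Chain' ResStep prf

/-- One step of a unit propagation proof: resolve against a unit clause, or weaken. -/
def UnitStep (Γ Γ' : CNF) : Prop :=
  ∃ C, Γ' = Γ ∪ {C} ∧
    ((∃ l, ({negLit l} : Clause) ∈ Γ ∧ l.1 ∉ varsClause C ∧ insert l C ∈ Γ)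
      ∨ (∃ D ∈ Γ, D ⊆ C ∧ ¬ Tauto C))

/-- `Γ` has a unit propagation refutation. -/
def UPRefutes (Γ : CNF) : Prop :=
  ∃ prf : List CNF, prf.head? = some Γ ∧ (∃ Δ, prf.getLast? = some Δ ∧ (∅ : Clause) ∈ Δ) ∧
    List.Chain' UnitStep prf

def negUnits (L : Finset Lit) : CNF := {C | ∃ p ∈ L, C = {negLit p}}

/-- `Γ ⊢₁ C`. -/
def UPDerives (Γ : CNF) (C : Clause) : Prop := UPRefutes (Γ ∪ negUnits C)

/-- Partial assignments as consistent sets of literals. -/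
def Consistent (α : Set Lit) : Prop := ∀ l ∈ α, negLit l ∉ α
def PSatClause (α : Set Lit) (C : Clause) : Prop := ∃ l ∈ C, l ∈ α
def PSatCNF (α : Set Lit) (Γ : CNF) : Prop := ∀ C ∈ Γ, PSatClause α C
def MinSat (α : Set Lit) (Γ : CNF) : Prop :=
  Consistent α ∧ PSatCNF α Γ ∧ ∀ β ⊂ α, ¬ PSatCNF β Γ

/-- `μ(Γ)`: clauses whose negation minimally satisfies `Γ`. -/
def mu (Γ : CNF) : CNF := {E | MinSat (↑(E.image negLit)) Γ}

/-- Projection of `Γ` onto a literal. -/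
def proj (p : Lit) (Γ : CNF) : CNF := {E | ∃ D ∈ Γ, p ∈ D ∧ E = D.erase p}

/-! If `α` satisfies `Γ` but falsifies `C`, then `α` falsifies every literal of `L ⊆ C`, so flipping
`α` on the variables of `L` satisfies `L`, hence `C`. A clause `D ∈ Γ` meeting `L` is then satisfied,
and one meeting neither `L` nor `¬L` keeps its value. Otherwise set-blockedness gives `m ∈ C \ L`
with `¬m ∈ D \ ¬L` (the other complementary pairs would make `C` or `D` tautological); the variable
of `m` is not flipped, and `¬m` is true under `α` because `m ∈ C` is false. -/

theorem negLit_negLit (l : Lit) : negLit (negLit l) = l := by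
  simp [negLit]

theorem mem_negSet {L : Finset Lit} {l : Lit} : l ∈ negSet L ↔ negLit l ∈ L := by
  constructor
  · intro hl
    obtain ⟨p, hp, rfl⟩ := Finset.mem_image.mp hl
    rwa [negLit_negLit]
  · intro hl
    exact Finset.mem_image.mpr ⟨negLit l, hl, negLit_negLit l⟩

theorem mem_varsClause_iff {L : Clause} {l : Lit} :
    l.1 ∈ varsClause L ↔ l ∈ L ∨ negLit l ∈ L := by
  obtain ⟨v, b⟩ := l
  simp only [varsClause, negLit, Finset.mem_image, Prod.exists, exists_and_right, exists_eq_right]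
  constructor
  · rintro ⟨b', hb'⟩
    cases b <;> cases b' <;> simp_all
  · rintro (h | h) <;> exact ⟨_, h⟩

theorem Tauto.of_union {A B : Finset Lit} (h : Tauto (A ∪ B)) :
    Tauto A ∨ Tauto B ∨ ∃ l ∈ A, negLit l ∈ B := by
  obtain ⟨l, hl, hnl⟩ := h
  rcases Finset.mem_union.mp hl with hl | hl <;> rcases Finset.mem_union.mp hnl with hnl | hnl
  · exact .inl ⟨l, hl, hnl⟩
  · exact .inr (.inr ⟨l, hl, hnl⟩)
  · exact .inr (.inr ⟨negLit l, hnl, by rwa [negLit_negLit]⟩)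
  · exact .inr (.inl ⟨l, hl, hnl⟩)

theorem Tauto.mono {A B : Finset Lit} (h : Tauto A) (hAB : A ⊆ B) : Tauto B :=
  let ⟨l, hl, hnl⟩ := h
  ⟨l, hAB hl, hAB hnl⟩

theorem satLit_negLit_iff {α : Assign} {l : Lit} : SatLit α (negLit l) ↔ ¬ SatLit α l := by
  obtain ⟨v, b⟩ := l
  cases h : α v <;> cases b <;> simp [SatLit, negLit, h]

theorem satClause_of_tauto {α : Assign} {D : Clause} (h : Tauto D) : SatClause α D := by
  obtain ⟨l, hl, hnl⟩ := h
  by_cases hα : SatLit α l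
  · exact ⟨l, hl, hα⟩
  · exact ⟨negLit l, hnl, satLit_negLit_iff.mpr hα⟩

theorem SatCNF.mono {α : Assign} {Γ Δ : CNF} (h : SatCNF α Δ) (hΓΔ : Γ ⊆ Δ) : SatCNF α Γ :=
  fun D hD => h D (hΓΔ hD)

def flipOn (α : Assign) (V : Finset Var) : Assign := fun v => if v ∈ V then !α v else α v

theorem satLit_flipOn_of_mem {α : Assign} {V : Finset Var} {l : Lit} (hl : l.1 ∈ V) :
    SatLit (flipOn α V) l ↔ ¬ SatLit α l := by
  obtain ⟨v, b⟩ := l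
  cases h : α v <;> cases b <;> simp_all [SatLit, flipOn]

theorem satLit_flipOn_of_notMem {α : Assign} {V : Finset Var} {l : Lit} (hl : l.1 ∉ V) :
    SatLit (flipOn α V) l ↔ SatLit α l := by
  simp [SatLit, flipOn, hl]

section SetBlocked

variable {Γ : CNF} {C : Clause} {L : Finset Lit} {α : Assign}

theorem satLit_flipOn_varsClause_of_subset (hLC : L ⊆ C) (hαC : ¬ SatClause α C)
    {l : Lit} (hl : l ∈ L) : SatLit (flipOn α (varsClause L)) l :=
  (satLit_flipOn_of_mem (mem_varsClause_iff.mpr (.inl hl))).mpr fun h => hαC ⟨l, hLC hl, h⟩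

theorem satClause_flipOn_of_mem_sdiff (hLC : L ⊆ C) (hαC : ¬ SatClause α C)
    {D : Clause} {m : Lit} (hm : m ∈ C \ L) (hnm : negLit m ∈ D) :
    SatClause (flipOn α (varsClause L)) D := by
  obtain ⟨hmC, hmL⟩ := Finset.mem_sdiff.mp hm
  have hnmL : negLit m ∉ L := fun h => hαC (satClause_of_tauto ⟨m, hmC, hLC h⟩)
  have hvar : m.1 ∉ varsClause L := by
    rw [mem_varsClause_iff]
    tauto
  refine ⟨negLit m, hnm, (satLit_flipOn_of_notMem (l := negLit m) hvar).mpr ?_⟩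
  exact satLit_negLit_iff.mpr fun h => hαC ⟨m, hmC, h⟩

theorem satClause_flipOn_of_setBlocked (hsb : SetBlocked C L Γ) (hαC : ¬ SatClause α C)
    {D : Clause} (hD : D ∈ Γ) (hαD : SatClause α D) :
    SatClause (flipOn α (varsClause L)) D := by
  obtain ⟨-, hLC, hblk⟩ := hsb
  by_cases hDL : (D ∩ L).Nonempty
  · obtain ⟨l, hl⟩ := hDL
    exact ⟨l, (Finset.mem_inter.mp hl).1,
      satLit_flipOn_varsClause_of_subset hLC hαC (Finset.mem_inter.mp hl).2⟩
  rw [Finset.not_nonempty_iff_eq_empty] at hDL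
  by_cases hDnL : (D ∩ negSet L).Nonempty
  · rcases (hblk D hD hDnL hDL).of_union with hCt | hDt | ⟨m, hm, hnm⟩
    · exact absurd (satClause_of_tauto (hCt.mono Finset.sdiff_subset)) hαC
    · exact satClause_of_tauto (hDt.mono Finset.sdiff_subset)
    · exact satClause_flipOn_of_mem_sdiff hLC hαC hm (Finset.mem_sdiff.mp hnm).1
  rw [Finset.not_nonempty_iff_eq_empty] at hDnL
  obtain ⟨l, hl, hαl⟩ := hαD
  have hvar : l.1 ∉ varsClause L := by
    rw [mem_varsClause_iff, ← mem_negSet]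
    rintro (h | h)
    · simpa [hDL] using Finset.mem_inter.mpr ⟨hl, h⟩
    · simpa [hDnL] using Finset.mem_inter.mpr ⟨hl, h⟩
  exact ⟨l, hl, (satLit_flipOn_of_notMem hvar).mpr hαl⟩

theorem Satisfiable.union_singleton_of_setBlocked (hsb : SetBlocked C L Γ) (h : Satisfiable Γ) :
    Satisfiable (Γ ∪ {C}) := by
  obtain ⟨α, hα⟩ := h
  by_cases hαC : SatClause α C
  · exact ⟨α, by rintro D (hD | rfl); exacts [hα D hD, hαC]⟩
  refine ⟨flipOn α (varsClause L), ?_⟩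
  rintro D (hD | rfl)
  · exact satClause_flipOn_of_setBlocked hsb hαC hD (hα D hD)
  · obtain ⟨p, hp⟩ := hsb.1
    exact ⟨p, hsb.2.1 hp, satLit_flipOn_varsClause_of_subset hsb.2.1 hαC hp⟩

end SetBlocked

theorem setBlocked_equisat_general (Γ : CNF) (C : Clause) (L : Finset Lit)
    (hsb : SetBlocked C L Γ) :
    Equisat Γ (Γ ∪ {C}) :=
  ⟨Satisfiable.union_singleton_of_setBlocked hsb,
    fun ⟨α, hα⟩ => ⟨α, hα.mono Set.subset_union_left⟩⟩

/-- set-blocked clauses are redundant. -/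
theorem setBlocked_equisat (Γ : CNF) (C : Clause) (L : Finset Lit)
    (hC : ¬ Tauto C) (hΓ : ∀ D ∈ Γ, ¬ Tauto D)
    (hsb : SetBlocked C L Γ) :
    Equisat Γ (Γ ∪ {C}) :=
  setBlocked_equisat_general Γ C L hsb
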